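/- For every covariant phase observable E and every coherent state |z⟩, the phase probability density satisfies g^E_{|z⟩}(arg z) ≤ g^{E_can}_{|z⟩}(arg z), i.e., the canonical phase observable maximizes the coherent state phase density at θ = arg z. -/

import Mathlib

open scoped Real Nat

/-! Evaluating the positive semidefinite form of `c` on the vectors `e_n + w e_m` with
`w ∈ {±1, ±i}` shows that the off-diagonal entries satisfy `|Re c_{nm}| ≤ 1` and
`|Im c_{nm}| ≤ 1`. Hence the series for the phase density converges absolutely, and termwise
`Re c_{nm} ≤ 1` compares it with the canonical series, whose coefficients are all `1`. -/

section PositiveSemidefiniteKernel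

variable {ι : Type*} [DecidableEq ι] {c : ι → ι → ℂ}

lemma sum_pair_quadForm (hdiag : ∀ n, c n n = 1) {n m : ι} (hnm : n ≠ m) (w : ℂ) :
    ∑ i ∈ ({n, m} : Finset ι), ∑ j ∈ ({n, m} : Finset ι),
        starRingEnd ℂ (if i = n then 1 else w) * c i j * (if j = n then 1 else w) =
      1 + c n m * w + starRingEnd ℂ w * c m n + starRingEnd ℂ w * w := by
  simp only [Finset.sum_pair hnm, ↓reduceIte, if_neg hnm.symm, hdiag, map_one]
  ring

lemma abs_re_le_one_and_abs_im_le_one_of_posSemidef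
    (hpsd : ∀ (F : Finset ι) (t : ι → ℂ),
      0 ≤ (∑ n ∈ F, ∑ m ∈ F, starRingEnd ℂ (t n) * c n m * t m).re ∧
      (∑ n ∈ F, ∑ m ∈ F, starRingEnd ℂ (t n) * c n m * t m).im = 0)
    (hdiag : ∀ n, c n n = 1) (n m : ι) :
    |(c n m).re| ≤ 1 ∧ |(c n m).im| ≤ 1 := by
  rcases eq_or_ne n m with rfl | hnm
  · simp [hdiag n]
  have hform (w : ℂ) :=
    sum_pair_quadForm hdiag hnm w ▸ hpsd {n, m} (fun k => if k = n then 1 else w)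
  obtain ⟨h1r, h1i⟩ := hform 1
  obtain ⟨h2r, h2i⟩ := hform Complex.I
  obtain ⟨h3r, -⟩ := hform (-1)
  obtain ⟨h4r, -⟩ := hform (-Complex.I)
  simp only [Complex.add_re, Complex.add_im, Complex.mul_re, Complex.mul_im, Complex.one_re,
    Complex.one_im, Complex.I_re, Complex.I_im, Complex.neg_re, Complex.neg_im, map_one, map_neg,
    Complex.conj_I] at h1r h1i h2r h2i h3r h4r
  exact ⟨abs_le.mpr ⟨by linarith, by linarith⟩, abs_le.mpr ⟨by linarith, by linarith⟩⟩

end PositiveSemidefiniteKernel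

lemma summable_pow_div_sqrt_factorial (a : ℝ) :
    Summable fun n : ℕ => a ^ n / √(n ! : ℝ) := by
  refine .of_norm_bounded
    (((Real.summable_pow_div_factorial ((2 * a) ^ 2)).add
      (summable_geometric_of_lt_one (r := (1 / 2) ^ 2) (by norm_num) (by norm_num))).div_const 2)
    fun n => ?_
  -- AM-GM with `u = (2a)ⁿ / √n!` and `v = 2⁻ⁿ`, so that `|u| |v| = |a|ⁿ / √n!`
  have hfac : (0 : ℝ) < n ! := by positivity
  set u := (2 * a) ^ n / √(n ! : ℝ)
  set v := (1 / 2 : ℝ) ^ n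
  have huv : ‖a ^ n / √(n ! : ℝ)‖ = |u| * |v| := by
    rw [← abs_mul, Real.norm_eq_abs, div_mul_eq_mul_div, ← mul_pow, mul_one_div,
      mul_div_cancel_left₀ a two_ne_zero]
  have hu : |u| ^ 2 = ((2 * a) ^ 2) ^ n / n ! := by
    rw [sq_abs, div_pow, Real.sq_sqrt hfac.le, ← pow_mul, ← pow_mul, mul_comm n 2]
  have hv : |v| ^ 2 = ((1 / 2) ^ 2) ^ n := by
    rw [sq_abs, ← pow_mul, ← pow_mul, mul_comm n 2]
  linarith [two_mul_le_add_sq |u| |v|]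

lemma summable_pow_add_div_sqrt_factorial_mul {a : ℝ} (ha : 0 ≤ a) :
    Summable fun p : ℕ × ℕ => a ^ (p.1 + p.2) / √((p.1 ! : ℝ) * p.2 !) := by
  have hnonneg : 0 ≤ fun n : ℕ => a ^ n / √(n ! : ℝ) := fun n => by positivity
  refine ((summable_pow_div_sqrt_factorial a).mul_of_nonneg
    (summable_pow_div_sqrt_factorial a) hnonneg hnonneg).congr fun p => ?_
  rw [pow_add, Real.sqrt_mul (Nat.cast_nonneg _), div_mul_div_comm]

lemma re_tsum_mul_ofReal_le {ι : Type*} {c : ι → ℂ} {r : ι → ℝ} {C : ℝ}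
    (hr : Summable r) (hr0 : ∀ i, 0 ≤ r i) (hnorm : ∀ i, ‖c i‖ ≤ C)
    (hre : ∀ i, (c i).re ≤ 1) :
    (∑' i, c i * r i).re ≤ (∑' i, (r i : ℂ)).re := by
  have hsum : Summable fun i => c i * r i := .of_norm_bounded (hr.mul_left C) fun i => by
    rw [norm_mul, Complex.norm_real, Real.norm_of_nonneg (hr0 i)]
    exact mul_le_mul_of_nonneg_right (hnorm i) (hr0 i)
  rw [Complex.re_tsum hsum, ← Complex.ofReal_tsum, Complex.ofReal_re]
  refine Summable.tsum_le_tsum (fun i => ?_) (Complex.reCLM.summable hsum) hr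
  simpa [Complex.mul_re] using mul_le_mul_of_nonneg_right (hre i) (hr0 i)

/-- For every covariant phase observable `E` (with phase matrix `c`) and every coherent
state `|z⟩`, the phase probability density at `θ = arg z` satisfies
`g^E_{|z⟩}(arg z) ≤ g^{E_can}_{|z⟩}(arg z)`: here
`g^E_{|z⟩}(arg z) = e^{-|z|²} ∑_{n,m} c_{n,m} |z|^{n+m}/√(n!m!)` and the canonical phase
observable corresponds to `c_{n,m} ≡ 1`. -/
theorem stmt19 (c : ℕ → ℕ → ℂ)
    (hpsd : ∀ (F : Finset ℕ) (t : ℕ → ℂ),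
      0 ≤ (∑ n ∈ F, ∑ m ∈ F, starRingEnd ℂ (t n) * c n m * t m).re ∧
      (∑ n ∈ F, ∑ m ∈ F, starRingEnd ℂ (t n) * c n m * t m).im = 0)
    (hdiag : ∀ n, c n n = 1) :
    ∀ z : ℂ,
      Real.exp (-(‖z‖) ^ 2) *
        (∑' p : ℕ × ℕ, c p.1 p.2 *
          (((‖z‖) ^ (p.1 + p.2) /
            Real.sqrt (Nat.factorial p.1 * Nat.factorial p.2) : ℝ) : ℂ)).re ≤
      Real.exp (-(‖z‖) ^ 2) *
        (∑' p : ℕ × ℕ,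
          (((‖z‖) ^ (p.1 + p.2) /
            Real.sqrt (Nat.factorial p.1 * Nat.factorial p.2) : ℝ) : ℂ)).re := by
  intro z
  have hentry := abs_re_le_one_and_abs_im_le_one_of_posSemidef hpsd hdiag
  refine mul_le_mul_of_nonneg_left (re_tsum_mul_ofReal_le (C := 2)
    (summable_pow_add_div_sqrt_factorial_mul (norm_nonneg z)) (fun p => by positivity)
    (fun p => ?_) (fun p => (le_abs_self _).trans (hentry p.1 p.2).1)) (Real.exp_pos _).le
  calc ‖c p.1 p.2‖ ≤ |(c p.1 p.2).re| + |(c p.1 p.2).im| :=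
        Complex.norm_le_abs_re_add_abs_im _
    _ ≤ 2 := by linarith [hentry p.1 p.2]
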